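/- Suppose 0 < a < b < 1 and there exists ε₀ > 0 such that: m is constant on [a,b]; m is non-increasing on [a−ε₀, a]; m is non-decreasing on [b, b+ε₀]; and for every ε ∈ (0, ε₀) there exist x ∈ (a−ε, a) with m'(x) < 0 and y ∈ (b, b+ε) with m'(y) > 0 (so [a,b] is a segment of local maximum of type [a^D, b^I]). Then limsup_{s→∞} λ₁ᴺ(s) ≤ λ₁^{DD}(a,b). -/

import Mathlib

open MeasureTheory Filter Set

/-- The Neumann principal eigenvalue of `-φ'' - 2 s m' φ' + c φ = λ φ` on `(0,1)`,
via its variational characterization. -/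
noncomputable def lambdaN (m c : ℝ → ℝ) (s : ℝ) : ℝ :=
  sInf {l : ℝ | ∃ φ : ℝ → ℝ, ContDiff ℝ 1 φ ∧
    (∫ x in (0:ℝ)..1, Real.exp (2 * s * m x) * (φ x) ^ 2) = 1 ∧
    l = ∫ x in (0:ℝ)..1, Real.exp (2 * s * m x) * ((deriv φ x) ^ 2 + c x * (φ x) ^ 2)}

/-- The principal eigenvalue of `-φ'' + c φ = λ φ` on `(a,b)`, with a Dirichlet
condition at `a` iff `dirA = true` and at `b` iff `dirB = true`
(Neumann, i.e. no constraint, otherwise), via its variational characterization. -/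
noncomputable def lambdaIJ (c : ℝ → ℝ) (dirA dirB : Bool) (a b : ℝ) : ℝ :=
  sInf {l : ℝ | ∃ φ : ℝ → ℝ, ContDiff ℝ 1 φ ∧
    (dirA = true → φ a = 0) ∧ (dirB = true → φ b = 0) ∧
    (∫ x in a..b, (φ x) ^ 2) = 1 ∧
    l = ∫ x in a..b, ((deriv φ x) ^ 2 + c x * (φ x) ^ 2)}

/-!
A test function supported in `(a, b)` only sees the constant weight `exp (2 s m a)` there, which
cancels in the Rayleigh quotient of `λ₁ᴺ(s)`; hence `λ₁ᴺ(s) ≤ λ₁ᴰᴰ(a, b)` for every `s`, and the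
bound on the limsup follows because `λ₁ᴺ(s) ≥ min (min_{[0,1]} c) 0` for all `s`.

A Dirichlet test function `φ` on `[a, b]`, extended by zero, is only continuous; composing it with
the smooth dead-zone map `deadZone r`, which vanishes on `[-r, r]`, makes it `C¹` and supported in
`(a, b)`, since the extension is small near `a` and `b`. The slope of `deadZone r` lies in `[0, 1]`,
so the gradient term does not increase, and `deadZone r → id` as `r → 0⁺`, so the zero-order terms
converge by dominated convergence.
-/

open Topology Interval

def lambdaNSet (m c : ℝ → ℝ) (s : ℝ) : Set ℝ :=
  {l : ℝ | ∃ φ : ℝ → ℝ, ContDiff ℝ 1 φ ∧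
    (∫ x in (0:ℝ)..1, Real.exp (2 * s * m x) * (φ x) ^ 2) = 1 ∧
    l = ∫ x in (0:ℝ)..1, Real.exp (2 * s * m x) * ((deriv φ x) ^ 2 + c x * (φ x) ^ 2)}

section LambdaN

variable {m c : ℝ → ℝ}

lemma lowerBounds_lambdaNSet (hm : Continuous m) (hc : Continuous c) {K : ℝ}
    (hK : ∀ x ∈ Icc (0 : ℝ) 1, K ≤ c x) (s : ℝ) : K ∈ lowerBounds (lambdaNSet m c s) := by
  rintro _ ⟨φ, hφ, hnorm, rfl⟩
  have hφ' := hφ.continuous_deriv le_rfl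
  have hφc := hφ.continuous
  calc K = ∫ x in (0 : ℝ)..1, K * (Real.exp (2 * s * m x) * φ x ^ 2) := by
        rw [intervalIntegral.integral_const_mul, hnorm, mul_one]
    _ ≤ _ := by
      refine intervalIntegral.integral_mono_on zero_le_one
        (Continuous.intervalIntegrable (by fun_prop) _ _)
        (Continuous.intervalIntegrable (by fun_prop) _ _) fun x hx => ?_
      have hw := (Real.exp_pos (2 * s * m x)).le
      nlinarith [mul_nonneg hw (sq_nonneg (deriv φ x)),
        mul_nonneg (mul_nonneg hw (sq_nonneg (φ x))) (sub_nonneg.2 (hK x hx))]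

lemma exists_mem_lowerBounds_lambdaNSet (hm : Continuous m) (hc : Continuous c) :
    ∃ K, ∀ s, K ∈ lowerBounds (lambdaNSet m c s) := by
  obtain ⟨K, hK⟩ := (isCompact_Icc (a := (0 : ℝ)) (b := 1)).bddBelow_image hc.continuousOn
  exact ⟨K, lowerBounds_lambdaNSet hm hc fun x hx => hK ⟨x, hx, rfl⟩⟩

lemma exists_forall_le_lambdaN (hm : Continuous m) (hc : Continuous c) :
    ∃ K, ∀ s, K ≤ lambdaN m c s := by
  obtain ⟨K, hK⟩ := exists_mem_lowerBounds_lambdaNSet hm hc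
  exact ⟨min K 0, fun s =>
    Real.le_sInf (fun l hl => (min_le_left _ _).trans (hK s hl)) (min_le_right _ _)⟩

lemma lambdaN_le_div (hm : Continuous m) (hc : Continuous c) {φ : ℝ → ℝ} (hφ : ContDiff ℝ 1 φ)
    {s : ℝ} (hpos : 0 < ∫ x in (0:ℝ)..1, Real.exp (2 * s * m x) * φ x ^ 2) :
    lambdaN m c s ≤ (∫ x in (0:ℝ)..1, Real.exp (2 * s * m x) * (deriv φ x ^ 2 + c x * φ x ^ 2)) /
      ∫ x in (0:ℝ)..1, Real.exp (2 * s * m x) * φ x ^ 2 := by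
  obtain ⟨K, hK⟩ := exists_mem_lowerBounds_lambdaNSet hm hc
  set N := ∫ x in (0:ℝ)..1, Real.exp (2 * s * m x) * φ x ^ 2
  have he : (√N)⁻¹ ^ 2 = N⁻¹ := by rw [inv_pow, Real.sq_sqrt hpos.le]
  refine csInf_le ⟨K, hK s⟩
    ⟨fun x => (√N)⁻¹ * φ x, contDiff_const.mul hφ, ?_, ?_⟩
  · have hscale (x : ℝ) : Real.exp (2 * s * m x) * ((√N)⁻¹ * φ x) ^ 2 =
        N⁻¹ * (Real.exp (2 * s * m x) * φ x ^ 2) := by rw [mul_pow, he]; ring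
    simp only [hscale, intervalIntegral.integral_const_mul]
    exact inv_mul_cancel₀ hpos.ne'
  · have hscale (x : ℝ) : Real.exp (2 * s * m x) * (((√N)⁻¹ * deriv φ x) ^ 2 +
        c x * ((√N)⁻¹ * φ x) ^ 2) =
        N⁻¹ * (Real.exp (2 * s * m x) * (deriv φ x ^ 2 + c x * φ x ^ 2)) := by
      rw [mul_pow, mul_pow, he]; ring
    simp only [deriv_const_mul_field', hscale, intervalIntegral.integral_const_mul,
      div_eq_inv_mul]

lemma integral_exp_mul_eq_of_eq_zero_off_Ioo {a b : ℝ} (h0a : 0 ≤ a) (hab : a ≤ b) (hb1 : b ≤ 1)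
    (hconst : ∀ x ∈ Icc a b, m x = m a) {F : ℝ → ℝ} (hF : ∀ x ∉ Ioo a b, F x = 0) (s : ℝ) :
    ∫ x in (0:ℝ)..1, Real.exp (2 * s * m x) * F x = Real.exp (2 * s * m a) * ∫ x in a..b, F x := by
  have hsupp : Function.support (fun x => Real.exp (2 * s * m x) * F x) ⊆ Ioo a b :=
    Function.support_subset_iff'.2 fun x hx => by simp [hF x hx]
  rw [intervalIntegral.integral_eq_integral_of_support_subset
      (hsupp.trans (Ioo_subset_Ioc_self.trans (Ioc_subset_Ioc h0a hb1))),
    ← intervalIntegral.integral_eq_integral_of_support_subset (hsupp.trans Ioo_subset_Ioc_self),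
    ← intervalIntegral.integral_const_mul]
  refine intervalIntegral.integral_congr fun x hx => ?_
  rw [uIcc_of_le hab] at hx
  simp only [hconst x hx]

lemma lambdaN_le_of_tsupport_subset (hm : Continuous m) (hc : Continuous c) {a b : ℝ}
    (h0a : 0 ≤ a) (hab : a ≤ b) (hb1 : b ≤ 1) (hconst : ∀ x ∈ Icc a b, m x = m a)
    {ψ : ℝ → ℝ} (hψ : ContDiff ℝ 1 ψ) (hsupp : tsupport ψ ⊆ Ioo a b)
    (hpos : 0 < ∫ x in a..b, ψ x ^ 2) (s : ℝ) :
    lambdaN m c s ≤ (∫ x in a..b, (deriv ψ x ^ 2 + c x * ψ x ^ 2)) / ∫ x in a..b, ψ x ^ 2 := by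
  have hvanish : ∀ x ∉ Ioo a b, ψ x = 0 ∧ deriv ψ x = 0 := fun x hx =>
    ⟨image_eq_zero_of_notMem_tsupport fun h => hx (hsupp h),
      Function.notMem_support.1 fun h => hx (hsupp (support_deriv_subset h))⟩
  have hmass := integral_exp_mul_eq_of_eq_zero_off_Ioo h0a hab hb1 hconst
    (F := fun x => ψ x ^ 2) (fun x hx => by simp [(hvanish x hx).1]) s
  have henergy := integral_exp_mul_eq_of_eq_zero_off_Ioo h0a hab hb1 hconst
    (F := fun x => deriv ψ x ^ 2 + c x * ψ x ^ 2) (fun x hx => by simp [hvanish x hx]) s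
  calc lambdaN m c s ≤ _ := lambdaN_le_div hm hc hψ (by rw [hmass]; positivity)
    _ = _ := by rw [hmass, henergy, mul_div_mul_left _ _ (Real.exp_pos _).ne']

end LambdaN

noncomputable def deadZoneBump : ContDiffBump (0 : ℝ) := ⟨1, 2, one_pos, one_lt_two⟩

/-- `deadZone r` smooths the soft-thresholding map `y ↦ sign y * max (|y| - r) 0`: its slope
`1 - deadZoneBump (y / r)` is `0` for `|y| ≤ r` and `1` for `|y| ≥ 2 * r`. -/
noncomputable def deadZone (r y : ℝ) : ℝ := y - r * ∫ t in (0 : ℝ)..y / r, deadZoneBump t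

section DeadZone

variable {r : ℝ}

lemma hasDerivAt_deadZone (hr : r ≠ 0) (y : ℝ) :
    HasDerivAt (deadZone r) (1 - deadZoneBump (y / r)) y := by
  have hI := (deadZoneBump.continuous.integral_hasStrictDerivAt 0 (y / r)).hasDerivAt
  have h := (hasDerivAt_id y).sub ((hI.comp y ((hasDerivAt_id y).div_const r)).const_mul r)
  rwa [mul_one_div, mul_div_cancel₀ _ hr] at h

lemma deriv_deadZone (hr : r ≠ 0) : deriv (deadZone r) = fun y => 1 - deadZoneBump (y / r) :=
  funext fun y => (hasDerivAt_deadZone hr y).deriv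

lemma contDiff_deadZone (hr : r ≠ 0) : ContDiff ℝ 1 (deadZone r) := by
  rw [contDiff_one_iff_deriv, deriv_deadZone hr]
  exact ⟨fun y => (hasDerivAt_deadZone hr y).differentiableAt,
    continuous_const.sub (deadZoneBump.continuous.comp (continuous_id.div_const r))⟩

lemma abs_deriv_deadZone_le (hr : r ≠ 0) (y : ℝ) : |deriv (deadZone r) y| ≤ 1 := by
  rw [deriv_deadZone hr, abs_le]
  constructor <;> linarith [deadZoneBump.nonneg' (y / r), deadZoneBump.le_one (x := y / r)]

lemma lipschitzWith_deadZone (hr : r ≠ 0) : LipschitzWith 1 (deadZone r) :=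
  lipschitzWith_of_nnnorm_deriv_le (contDiff_deadZone hr).differentiable_one fun y => by
    rw [← NNReal.coe_le_coe, coe_nnnorm, NNReal.coe_one]
    exact abs_deriv_deadZone_le hr y

lemma abs_deadZone_le (hr : r ≠ 0) (y : ℝ) : |deadZone r y| ≤ |y| := by
  simpa [deadZone, Real.dist_eq] using (lipschitzWith_deadZone hr).dist_le_mul y 0

lemma deadZone_eq_zero (hr : 0 < r) {y : ℝ} (hy : |y| ≤ r) : deadZone r y = 0 := by
  have hbump : ∫ t in (0 : ℝ)..y / r, deadZoneBump t = ∫ t in (0 : ℝ)..y / r, (1 : ℝ) := by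
    refine intervalIntegral.integral_congr fun t ht => deadZoneBump.one_of_mem_closedBall ?_
    have hyr : |y / r| ≤ 1 := by rwa [abs_div, abs_of_pos hr, div_le_one hr]
    rw [Metric.mem_closedBall, Real.dist_eq, sub_zero, abs_le]
    exact uIcc_subset_Icc (by norm_num : (0 : ℝ) ∈ Icc (-1) 1) (abs_le.1 hyr) ht
  simp [deadZone, hbump, mul_div_cancel₀ _ hr.ne']

lemma deadZone_eventuallyEq_zero (hr : 0 < r) : deadZone r =ᶠ[𝓝 0] 0 := by
  filter_upwards [Metric.closedBall_mem_nhds 0 hr] with y hy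
  exact deadZone_eq_zero hr (by simpa using hy)

lemma abs_deadZone_sub_le (hr : 0 < r) (y : ℝ) :
    |deadZone r y - y| ≤ r * ∫ t, deadZoneBump t := by
  rw [deadZone, sub_sub_cancel_left, abs_neg, abs_mul, abs_of_pos hr]
  gcongr
  rw [← Real.norm_eq_abs]
  calc ‖∫ t in (0 : ℝ)..y / r, deadZoneBump t‖
      ≤ ∫ t in Ι 0 (y / r), ‖deadZoneBump t‖ := intervalIntegral.norm_integral_le_integral_norm_uIoc
    _ ≤ ∫ t, ‖deadZoneBump t‖ :=
        setIntegral_le_integral deadZoneBump.integrable.norm (.of_forall fun _ => norm_nonneg _)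
    _ = ∫ t, deadZoneBump t := by simp_rw [Real.norm_of_nonneg (deadZoneBump.nonneg' _)]

lemma tendsto_deadZone (y : ℝ) : Tendsto (fun r => deadZone r y) (𝓝[>] 0) (𝓝 y) := by
  rw [tendsto_iff_norm_sub_tendsto_zero]
  have hlim : Tendsto (fun r => r * ∫ t, deadZoneBump t) (𝓝[>] 0) (𝓝 0) := by
    refine tendsto_nhdsWithin_of_tendsto_nhds ?_
    simpa using (continuous_id.mul_const (∫ t, deadZoneBump t)).tendsto 0
  refine squeeze_zero' (.of_forall fun _ => norm_nonneg _) ?_ hlim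
  filter_upwards [self_mem_nhdsWithin] with r hr
  exact abs_deadZone_sub_le hr y

end DeadZone

section Truncation

variable {h f φ : ℝ → ℝ} {a b x : ℝ}

lemma comp_eventuallyEq_zero (hh : h =ᶠ[𝓝 0] 0) (hf : ContinuousAt f x) (hfx : f x = 0) :
    h ∘ f =ᶠ[𝓝 x] 0 :=
  hh.comp_tendsto (hfx ▸ hf)

lemma comp_eventuallyEq_comp_of_mem_Icc (hh : h =ᶠ[𝓝 0] 0) (hf : Continuous f)
    (hf0 : ∀ x ∉ Ioo a b, f x = 0) (hfφ : EqOn f φ (Icc a b)) (hφ : Continuous φ)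
    (hx : x ∈ Icc a b) : h ∘ f =ᶠ[𝓝 x] h ∘ φ := by
  by_cases hx' : x ∈ Ioo a b
  · filter_upwards [Ioo_mem_nhds hx'.1 hx'.2] with y hy
    simp [hfφ (Ioo_subset_Icc_self hy)]
  · have hφx : φ x = 0 := hfφ hx ▸ hf0 x hx'
    exact (comp_eventuallyEq_zero hh hf.continuousAt (hf0 x hx')).trans
      (comp_eventuallyEq_zero hh hφ.continuousAt hφx).symm

lemma contDiff_comp_of_eqOn_Icc (hh : ContDiff ℝ 1 h) (hh0 : h =ᶠ[𝓝 0] 0) (hf : Continuous f)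
    (hf0 : ∀ x ∉ Ioo a b, f x = 0) (hfφ : EqOn f φ (Icc a b)) (hφ : ContDiff ℝ 1 φ) :
    ContDiff ℝ 1 (h ∘ f) := by
  refine contDiff_iff_contDiffAt.2 fun x => ?_
  by_cases hx : x ∈ Ioo a b
  · exact (hh.comp hφ).contDiffAt.congr_of_eventuallyEq
      (comp_eventuallyEq_comp_of_mem_Icc hh0 hf hf0 hfφ hφ.continuous (Ioo_subset_Icc_self hx))
  · exact contDiffAt_const.congr_of_eventuallyEq
      (comp_eventuallyEq_zero hh0 hf.continuousAt (hf0 x hx))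

lemma tsupport_comp_subset_Ioo (hh0 : h =ᶠ[𝓝 0] 0) (hf : Continuous f)
    (hf0 : ∀ x ∉ Ioo a b, f x = 0) : tsupport (h ∘ f) ⊆ Ioo a b := fun x hx => by
  by_contra hx'
  exact notMem_tsupport_iff_eventuallyEq.2
    (comp_eventuallyEq_zero hh0 hf.continuousAt (hf0 x hx')) hx

end Truncation

lemma tendsto_integral_add_mul_deadZone_sq {g w φ : ℝ → ℝ} (hg : Continuous g)
    (hw : Continuous w) (hφ : Continuous φ) (a b : ℝ) :
    Tendsto (fun r => ∫ x in a..b, (g x + w x * deadZone r (φ x) ^ 2)) (𝓝[>] 0)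
      (𝓝 (∫ x in a..b, (g x + w x * φ x ^ 2))) := by
  refine intervalIntegral.tendsto_integral_filter_of_dominated_convergence
    (fun x => |g x| + |w x| * φ x ^ 2) ?_ ?_ (Continuous.intervalIntegrable (by fun_prop) _ _)
    (.of_forall fun x _ => (((tendsto_deadZone (φ x)).pow 2).const_mul (w x)).const_add (g x))
  · filter_upwards [self_mem_nhdsWithin] with r hr
    have := (lipschitzWith_deadZone (hr.ne')).continuous
    exact (Continuous.aestronglyMeasurable (by fun_prop))
  · filter_upwards [self_mem_nhdsWithin] with r hr
    refine .of_forall fun x _ => (norm_add_le _ _).trans (add_le_add (Real.norm_eq_abs _).le ?_)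
    rw [norm_mul, norm_pow, Real.norm_eq_abs, Real.norm_eq_abs, ← sq_abs (φ x)]
    exact mul_le_mul_of_nonneg_left
      (pow_le_pow_left₀ (abs_nonneg _) (abs_deadZone_le (hr.ne') _) 2) (abs_nonneg _)

section Dirichlet

variable {m c φ : ℝ → ℝ} {a b : ℝ}

lemma exists_continuous_eqOn_Icc_eq_zero_off_Ioo (hab : a ≤ b) (hφ : Continuous φ)
    (hφa : φ a = 0) (hφb : φ b = 0) :
    ∃ f : ℝ → ℝ, Continuous f ∧ (∀ x ∉ Ioo a b, f x = 0) ∧ EqOn f φ (Icc a b) := by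
  refine ⟨IccExtend hab ((Icc a b).domRestrict φ),
    continuous_IccExtend_iff.2 hφ.continuousOn.domRestrict, fun x hx => ?_,
    fun x hx => IccExtend_of_mem _ _ hx⟩
  rcases not_and_or.1 hx with hx | hx
  · simp [IccExtend_of_le_left _ _ (not_lt.1 hx), domRestrict_apply, hφa]
  · simp [IccExtend_of_right_le _ _ (not_lt.1 hx), domRestrict_apply, hφb]

lemma lambdaN_le_div_of_deadZone_comp (hm : Continuous m) (hc : Continuous c) (h0a : 0 ≤ a)
    (hab : a ≤ b) (hb1 : b ≤ 1) (hconst : ∀ x ∈ Icc a b, m x = m a) (hφ : ContDiff ℝ 1 φ)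
    (hφa : φ a = 0) (hφb : φ b = 0) {r : ℝ} (hr : 0 < r)
    (hpos : 0 < ∫ x in a..b, deadZone r (φ x) ^ 2) (s : ℝ) :
    lambdaN m c s ≤ (∫ x in a..b, (deriv φ x ^ 2 + c x * deadZone r (φ x) ^ 2)) /
      ∫ x in a..b, deadZone r (φ x) ^ 2 := by
  obtain ⟨f, hf, hf0, hfφ⟩ := exists_continuous_eqOn_Icc_eq_zero_off_Ioo hab hφ.continuous hφa hφb
  have hψφ : ∀ x ∈ Icc a b, deadZone r ∘ f =ᶠ[𝓝 x] deadZone r ∘ φ := fun x =>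
    comp_eventuallyEq_comp_of_mem_Icc (deadZone_eventuallyEq_zero hr) hf hf0 hfφ hφ.continuous
  have hmass : ∫ x in a..b, (deadZone r ∘ f) x ^ 2 = ∫ x in a..b, deadZone r (φ x) ^ 2 :=
    intervalIntegral.integral_congr fun x hx => by
      rw [uIcc_of_le hab] at hx
      simp only [(hψφ x hx).eq_of_nhds, Function.comp_apply]
  have hψ : ContDiff ℝ 1 (deadZone r ∘ f) := contDiff_comp_of_eqOn_Icc
    (contDiff_deadZone hr.ne') (deadZone_eventuallyEq_zero hr) hf hf0 hfφ hφ
  have := hψ.continuous_deriv le_rfl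
  have := hφ.continuous_deriv le_rfl
  have := (contDiff_deadZone hr.ne').continuous
  calc lambdaN m c s ≤ _ := lambdaN_le_of_tsupport_subset hm hc h0a hab hb1 hconst hψ
        (tsupport_comp_subset_Ioo (deadZone_eventuallyEq_zero hr) hf hf0) (hmass ▸ hpos) s
    _ ≤ _ := by
      rw [hmass]
      refine div_le_div_of_nonneg_right (intervalIntegral.integral_mono_on hab
        (Continuous.intervalIntegrable (by fun_prop) _ _)
        (Continuous.intervalIntegrable (by fun_prop) _ _) fun x hx => ?_) hpos.le
      have hchain : deriv (deadZone r ∘ φ) x = deriv (deadZone r) (φ x) * deriv φ x :=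
        deriv_comp x ((contDiff_deadZone hr.ne').differentiable_one _) (hφ.differentiable_one x)
      have hslope : deriv (deadZone r) (φ x) ^ 2 ≤ 1 :=
        sq_le_one_iff_abs_le_one _ |>.2 (abs_deriv_deadZone_le hr.ne' _)
      rw [(hψφ x hx).deriv_eq, (hψφ x hx).eq_of_nhds, hchain, Function.comp_apply, mul_pow]
      nlinarith [sq_nonneg (deriv φ x)]

lemma lambdaN_le_energy_of_dirichlet (hm : Continuous m) (hc : Continuous c) (h0a : 0 ≤ a)
    (hab : a ≤ b) (hb1 : b ≤ 1) (hconst : ∀ x ∈ Icc a b, m x = m a) (hφ : ContDiff ℝ 1 φ)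
    (hφa : φ a = 0) (hφb : φ b = 0) (hnorm : ∫ x in a..b, φ x ^ 2 = 1) (s : ℝ) :
    lambdaN m c s ≤ ∫ x in a..b, (deriv φ x ^ 2 + c x * φ x ^ 2) := by
  have hmass := tendsto_integral_add_mul_deadZone_sq continuous_const continuous_const
    hφ.continuous a b (g := 0) (w := 1)
  simp only [Pi.zero_apply, Pi.one_apply, zero_add, one_mul, hnorm] at hmass
  have henergy := tendsto_integral_add_mul_deadZone_sq ((hφ.continuous_deriv le_rfl).pow 2)
    hc hφ.continuous a b
  refine ge_of_tendsto (by simpa using henergy.div hmass one_ne_zero) ?_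
  filter_upwards [self_mem_nhdsWithin, hmass.eventually (lt_mem_nhds zero_lt_one)] with r hr hpos
  exact lambdaN_le_div_of_deadZone_comp hm hc h0a hab hb1 hconst hφ hφa hφb hr hpos s

end Dirichlet

def lambdaIJSet (c : ℝ → ℝ) (dirA dirB : Bool) (a b : ℝ) : Set ℝ :=
  {l : ℝ | ∃ φ : ℝ → ℝ, ContDiff ℝ 1 φ ∧
    (dirA = true → φ a = 0) ∧ (dirB = true → φ b = 0) ∧
    (∫ x in a..b, (φ x) ^ 2) = 1 ∧
    l = ∫ x in a..b, ((deriv φ x) ^ 2 + c x * (φ x) ^ 2)}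

lemma lambdaIJSet_nonempty (c : ℝ → ℝ) (dirA dirB : Bool) {a b : ℝ} (hab : a < b) :
    (lambdaIJSet c dirA dirB a b).Nonempty := by
  set N := ∫ x in a..b, ((x - a) * (b - x)) ^ 2
  have hpos : 0 < N := intervalIntegral.intervalIntegral_pos_of_pos_on
    (Continuous.intervalIntegrable (by fun_prop) _ _)
    (fun x hx => pow_pos (mul_pos (sub_pos.2 hx.1) (sub_pos.2 hx.2)) 2) hab
  have hscale (x : ℝ) : ((√N)⁻¹ * ((x - a) * (b - x))) ^ 2 = N⁻¹ * ((x - a) * (b - x)) ^ 2 := by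
    rw [mul_pow, inv_pow, Real.sq_sqrt hpos.le]
  refine ⟨_, fun x => (√N)⁻¹ * ((x - a) * (b - x)), by fun_prop, fun _ => by simp,
    fun _ => by simp, ?_, rfl⟩
  simp only [hscale, intervalIntegral.integral_const_mul]
  exact inv_mul_cancel₀ hpos.ne'

lemma lambdaN_le_lambdaIJ_DD {m c : ℝ → ℝ} (hm : Continuous m) (hc : Continuous c) {a b : ℝ}
    (h0a : 0 ≤ a) (hab : a < b) (hb1 : b ≤ 1) (hconst : ∀ x ∈ Icc a b, m x = m a) (s : ℝ) :
    lambdaN m c s ≤ lambdaIJ c true true a b := by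
  refine le_csInf (lambdaIJSet_nonempty c true true hab) ?_
  rintro _ ⟨φ, hφ, hφa, hφb, hnorm, rfl⟩
  exact lambdaN_le_energy_of_dirichlet hm hc h0a hab.le hb1 hconst hφ (hφa rfl) (hφb rfl) hnorm s

/-- If `[a,b]` is a segment of local maximum of type `[aᴰ, bᴵ]`, then
`limsup_{s→∞} λ₁ᴺ(s) ≤ λ₁ᴰᴰ(a,b)`. -/
theorem limsup_lambdaN_le_lambdaDD_of_segment_DI
    (m c : ℝ → ℝ) (hm : ContDiff ℝ 2 m) (hc : Continuous c)
    (a b : ℝ) (ha : 0 < a) (hab : a < b) (hb : b < 1)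
    (hseg : ∃ ε₀ > (0:ℝ),
      (∀ x ∈ Set.Icc a b, m x = m a) ∧
      AntitoneOn m (Set.Icc (a - ε₀) a) ∧
      MonotoneOn m (Set.Icc b (b + ε₀)) ∧
      (∀ ε ∈ Set.Ioo (0:ℝ) ε₀,
        (∃ x ∈ Set.Ioo (a - ε) a, deriv m x < 0) ∧
        (∃ y ∈ Set.Ioo b (b + ε), 0 < deriv m y))) :
    Filter.limsup (lambdaN m c) Filter.atTop ≤ lambdaIJ c true true a b := by
  obtain ⟨-, -, hconst, -⟩ := hseg
  obtain ⟨K, hK⟩ := exists_forall_le_lambdaN hm.continuous hc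
  exact limsup_le_of_le (isCoboundedUnder_le_of_le atTop hK) <| .of_forall
    (lambdaN_le_lambdaIJ_DD hm.continuous hc ha.le hab hb.le hconst)
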